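/- Let h: ℝⁿ → ℝⁿ be a C¹ map whose Jacobian matrix H(z) at every point z is invertible and has exactly one nonzero entry in each row, with the same sparsity pattern (same nonzero positions) for all z. Then h is a composition of a fixed coordinate permutation and a componentwise map: h(z)_k = h_k(z_{π(k)}) for some permutation π and functions h_k: ℝ → ℝ with nonvanishing derivative. -/

import Mathlib

/-!
Since the `k`-th row of the Jacobian vanishes off column `π k`, the component `h · k` has zero
derivative along every direction `v` with `v (π k) = 0`; restricting it to the segment between two
points with the same `π k`-coordinate shows that it depends on `z (π k)` only. Column `j` of the
Jacobian vanishes unless `j` is hit by `π`, so invertibility forces `π` to be surjective.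
-/

open Function

theorem LinearMap.apply_eq_smul_of_apply_single_eq_zero {ι R M : Type*} [Fintype ι]
    [DecidableEq ι] [Semiring R] [AddCommMonoid M] [Module R M] (L : (ι → R) →ₗ[R] M) {i : ι}
    (hL : ∀ j, j ≠ i → L (Pi.single j 1) = 0) (v : ι → R) :
    L v = v i • L (Pi.single i 1) := by
  conv_lhs => rw [pi_eq_sum_univ' v, map_sum]
  simp only [map_smul]
  exact Finset.sum_eq_single_of_mem i (Finset.mem_univ i) fun j _ hj => by rw [hL j hj, smul_zero]

theorem Matrix.surjective_of_det_ne_zero_of_apply_eq_zero {n R : Type*} [Fintype n]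
    [DecidableEq n] [CommRing R] {M : Matrix n n R} (hM : M.det ≠ 0) {π : n → n}
    (hπ : ∀ k j, j ≠ π k → M k j = 0) : Surjective π := by
  intro j
  by_contra! hj
  exact hM (M.det_eq_zero_of_column_eq_zero j fun k => hπ k j (hj k).symm)

section Calculus

variable {E F : Type*} [NormedAddCommGroup E] [NormedSpace ℝ E] [NormedAddCommGroup F]
  [NormedSpace ℝ F]

theorem Differentiable.apply_add_eq_of_fderiv_apply_eq_zero {f : E → F}
    (hf : Differentiable ℝ f) {v : E} (hv : ∀ x, fderiv ℝ f x v = 0) (x : E) :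
    f (x + v) = f x := by
  have hline : ∀ t : ℝ, HasDerivAt (fun s : ℝ => f (x + s • v)) 0 t := fun t => by
    have := (hf _).hasFDerivAt.comp_hasDerivAt t (((hasDerivAt_id t).smul_const v).const_add x)
    simpa [hv, Function.comp_def] using this
  simpa using is_const_of_deriv_eq_zero (fun t => (hline t).differentiableAt)
    (fun t => (hline t).deriv) 1 0

variable {ι : Type*} [Fintype ι] [DecidableEq ι]

theorem Differentiable.eq_apply_single_of_fderiv_single_eq_zero {f : (ι → ℝ) → F}
    (hf : Differentiable ℝ f) {i : ι} (hf' : ∀ x j, j ≠ i → fderiv ℝ f x (Pi.single j 1) = 0)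
    (x : ι → ℝ) : f x = f (Pi.single i (x i)) := by
  have hv : ∀ y, fderiv ℝ f y (Pi.single i (x i) - x) = 0 := fun y => by
    refine ((fderiv ℝ f y).toLinearMap.apply_eq_smul_of_apply_single_eq_zero (hf' y) _).trans ?_
    simp
  simpa using (hf.apply_add_eq_of_fderiv_apply_eq_zero hv x).symm

theorem Differentiable.hasDerivAt_comp_single {f : (ι → ℝ) → F} (hf : Differentiable ℝ f)
    (i : ι) (t : ℝ) :
    HasDerivAt (fun s => f (Pi.single i s)) (fderiv ℝ f (Pi.single i t) (Pi.single i 1)) t :=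
  (hf _).hasFDerivAt.comp_hasDerivAt t (hasDerivAt_single i t)

end Calculus

/-- **A map with row-sparse invertible Jacobian is a permutation composed with a
componentwise transformation.**
If `h : ℝⁿ → ℝⁿ` is C¹ with invertible Jacobian `H(z)` everywhere, and there is
`π : Fin n → Fin n` such that the `(k,j)` entry of `H(z)` is nonzero iff `j = π k`
(one nonzero entry per row, constant sparsity pattern), then `π` is a bijection and
`h(z)_k = h_k(z_{π(k)})` for some scalar functions `h_k` with nonvanishing derivative. -/
theorem rowSparse_jacobian_implies_perm_componentwise {n : ℕ}
    (h : (Fin n → ℝ) → (Fin n → ℝ)) (hh : ContDiff ℝ 1 h)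
    (π : Fin n → Fin n)
    (hJinv : ∀ z, (Matrix.of fun k j => fderiv ℝ h z (Pi.single j 1) k).det ≠ 0)
    (hsparse : ∀ z k j, fderiv ℝ h z (Pi.single j 1) k ≠ 0 ↔ j = π k) :
    Function.Bijective π ∧
    ∃ g : Fin n → ℝ → ℝ, (∀ k x, deriv (g k) x ≠ 0) ∧
      ∀ z k, h z k = g k (z (π k)) := by
  have hd : Differentiable ℝ h := hh.differentiable one_ne_zero
  have hdk : ∀ k, Differentiable ℝ (fun z => h z k) := fun k => differentiable_pi.mp hd k
  have hpartial : ∀ k z v, fderiv ℝ (fun z => h z k) z v = fderiv ℝ h z v k := fun k z v => by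
    rw [fderiv_apply (hd z)]
    rfl
  have hoff : ∀ z k j, j ≠ π k → fderiv ℝ h z (Pi.single j 1) k = 0 := fun z k j hj =>
    not_not.mp fun hne => hj ((hsparse z k j).mp hne)
  refine ⟨Finite.surjective_iff_bijective.mp <|
    Matrix.surjective_of_det_ne_zero_of_apply_eq_zero (hJinv 0) (hoff 0),
    fun k x => h (Pi.single (π k) x) k, fun k x => ?_, fun z k => ?_⟩
  · rw [((hdk k).hasDerivAt_comp_single (π k) x).deriv, hpartial]
    exact (hsparse _ k (π k)).mpr rfl
  · refine (hdk k).eq_apply_single_of_fderiv_single_eq_zero (fun x j hj => ?_) z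
    rw [hpartial]
    exact hoff x k j hj
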